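/- Let n ≥ 2 and let E = {[w] ⊕ (z·I_{n−1}) : z, w ∈ ℂ} ⊂ ℂ^{n×n}. For a matrix A ∈ ℂ^{n×n} and r > 0, one has μ_E(A) ≤ 1/r if and only if the zero set in ℂ² of the polynomial (z,w) ↦ (1 + Σ_{j=1}^{n−1}(−1)^j Y_j(A) z^j) − w(Σ_{j=0}^{n−1}(−1)^j X_{j+1}(A) z^j) is disjoint from (r𝔻)² = {(z,w) : |z| < r, |w| < r}, where (X(A), Y(A)) = π_n(A) is as in the definition of π_n. -/

import Mathlib

open Matrix BigOperators
open scoped ENNReal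

/-- Determinant of the principal submatrix of `A` indexed by `s`. -/
noncomputable def subDet {m : ℕ} (A : Matrix (Fin m) (Fin m) ℂ) (s : Finset (Fin m)) : ℂ :=
  Matrix.det (A.submatrix (fun i : {a : Fin m // a ∈ s} => (i : Fin m))
    (fun i : {a : Fin m // a ∈ s} => (i : Fin m)))

/-- `piX A j` = sum of dets of `j × j` principal submatrices whose index set contains 0. -/
noncomputable def piX {m : ℕ} [NeZero m] (A : Matrix (Fin m) (Fin m) ℂ) (j : ℕ) : ℂ :=
  ∑ s ∈ Finset.univ.filter (fun s : Finset (Fin m) => s.card = j ∧ (0 : Fin m) ∈ s),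
    subDet A s

/-- `piY A j` = sum of dets of `j × j` principal submatrices whose index set avoids 0. -/
noncomputable def piY {m : ℕ} [NeZero m] (A : Matrix (Fin m) (Fin m) ℂ) (j : ℕ) : ℂ :=
  ∑ s ∈ Finset.univ.filter (fun s : Finset (Fin m) => s.card = j ∧ (0 : Fin m) ∉ s),
    subDet A s

/-- The operator norm of a complex matrix, relative to the Euclidean norm on `ℂ^N`. -/
noncomputable def opNorm {N : ℕ} (M : Matrix (Fin N) (Fin N) ℂ) : ℝ :=
  ‖LinearMap.toContinuousLinearMap (Matrix.toEuclideanLin M)‖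

/-- The structured singular value `μ_E(A) = (inf{‖X‖ : X ∈ E, I − AX singular})⁻¹`,
valued in `ℝ≥0∞` (the infimum over the empty set is `∞`, so then `μ_E(A) = 0`). -/
noncomputable def mu {N : ℕ} (E : Set (Matrix (Fin N) (Fin N) ℂ))
    (A : Matrix (Fin N) (Fin N) ℂ) : ℝ≥0∞ :=
  (⨅ X : {X : Matrix (Fin N) (Fin N) ℂ // X ∈ E ∧ Matrix.det (1 - A * X) = 0},
    ENNReal.ofReal (opNorm X.1))⁻¹

/-- The block-diagonal matrix `[w] ⊕ (z·I_{n+1})`. -/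
noncomputable def bdiag (n : ℕ) (w z : ℂ) : Matrix (Fin (n+2)) (Fin (n+2)) ℂ :=
  Matrix.diagonal (fun i => if i = 0 then w else z)

/-! Expanding `det (1 + M)` multilinearly in the rows gives the sum of all principal minors of
`M`. For `M = -A · ([w] ⊕ z I)` the minor on `s` is `(-1)^|s|` times the minor of `A` times
`w z^(|s|-1)` or `z^|s|` according as `0 ∈ s` or not, so grouping the minors by size and by whether
they contain `0` turns `det (I - A M)` into the displayed polynomial. The operator norm of a
diagonal matrix is the largest modulus of its entries, so `‖M‖ = max(|w|, |z|)`, and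
`μ_E(A) ≤ 1/r` says exactly that `I - A M` is invertible whenever `|w|, |z| < r`. -/

namespace Matrix

variable {R n : Type*} [CommRing R] [Fintype n] [DecidableEq n]

theorem det_one_add_eq_sum_principal_minors (M : Matrix n n R) :
    det (1 + M) = ∑ s : Finset n, (M.submatrix (↑) (↑) : Matrix s s R).det := by
  have h := (detRowAlternating : (n → R) [⋀^n]→ₗ[R] R).map_add_univ M.row (1 : Matrix n n R).row
  rw [show M.row + (1 : Matrix n n R).row = (1 + M).row from add_comm _ _] at h
  exact h.trans (Finset.sum_congr rfl fun s _ => det_piecewise_one_eq_submatrix_det M s)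

theorem det_one_sub_mul_diagonal (A : Matrix n n R) (d : n → R) :
    det (1 - A * diagonal d) = ∑ s : Finset n,
      (-1) ^ s.card * (A.submatrix (↑) (↑) : Matrix s s R).det * ∏ i ∈ s, d i := by
  rw [sub_eq_add_neg, det_one_add_eq_sum_principal_minors]
  refine Finset.sum_congr rfl fun s _ => ?_
  have hsub : (-(A * diagonal d)).submatrix ((↑) : s → n) (↑) =
      -(A.submatrix (↑) (↑) * diagonal fun i : s => d i) := by
    ext i j
    simp [mul_diagonal]
  rw [hsub, det_neg, det_mul, det_diagonal, Fintype.card_coe, Finset.prod_coe_sort, mul_assoc]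

end Matrix

theorem Finset.prod_ite_eq_const {α M : Type*} [DecidableEq α] [CommMonoid M]
    (s : Finset α) (a : α) (w z : M) :
    ∏ i ∈ s, (if i = a then w else z) = if a ∈ s then w * z ^ (s.card - 1) else z ^ s.card := by
  split_ifs with ha
  · rw [← Finset.mul_prod_erase s _ ha, if_pos rfl,
      Finset.prod_congr rfl fun i hi => if_neg (Finset.ne_of_mem_erase hi), Finset.prod_const,
      Finset.card_erase_of_mem ha]
  · rw [Finset.prod_congr rfl fun i hi => if_neg (ne_of_mem_of_not_mem hi ha), Finset.prod_const]

theorem Finset.sum_filter_eq_sum_range_card {α R : Type*} [Fintype α] [CommSemiring R]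
    (p : Finset α → Prop) [DecidablePred p] (g : ℕ → R) (f : Finset α → R) :
    ∑ s ∈ univ.filter p, g s.card * f s =
      ∑ j ∈ range (Fintype.card α + 1),
        g j * ∑ s ∈ univ.filter (fun s => s.card = j ∧ p s), f s := by
  rw [← Finset.sum_fiberwise_of_maps_to (g := Finset.card) (t := range (Fintype.card α + 1))
    fun s _ => mem_range_succ_iff.2 (card_le_univ s)]
  refine Finset.sum_congr rfl fun j _ => ?_
  rw [Finset.mul_sum, Finset.filter_filter]
  refine Finset.sum_congr (by simp only [and_comm]) fun s hs => ?_
  rw [(Finset.mem_filter.1 hs).2.1]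

section Minors

variable {m : ℕ} [NeZero m] (A : Matrix (Fin m) (Fin m) ℂ)

theorem piX_zero : piX A 0 = 0 :=
  Finset.sum_eq_zero fun s hs => by
    obtain ⟨hcard, h0⟩ := (Finset.mem_filter.1 hs).2
    simp [Finset.card_eq_zero.1 hcard] at h0

theorem piY_zero : piY A 0 = 1 := by
  have hempty : Finset.univ.filter (fun s : Finset (Fin m) => s.card = 0 ∧ (0 : Fin m) ∉ s) =
      {∅} := by
    ext s
    simp +contextual [Finset.card_eq_zero]
  rw [piY, hempty, Finset.sum_singleton, subDet, Matrix.det_isEmpty]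

theorem piY_dim : piY A m = 0 :=
  Finset.sum_eq_zero fun s hs => by
    obtain ⟨hcard, h0⟩ := (Finset.mem_filter.1 hs).2
    rw [(Finset.card_eq_iff_eq_univ s).1 (by simpa using hcard)] at h0
    exact absurd (Finset.mem_univ _) h0

end Minors

theorem det_one_sub_mul_bdiag (n : ℕ) (A : Matrix (Fin (n+2)) (Fin (n+2)) ℂ) (w z : ℂ) :
    (1 - A * bdiag n w z).det =
      (1 + ∑ j ∈ Finset.Icc 1 (n+1), (-1 : ℂ) ^ j * piY A j * z ^ j)
        - w * ∑ j ∈ Finset.range (n+2), (-1 : ℂ) ^ j * piX A (j+1) * z ^ j := by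
  have hsplit : (1 - A * bdiag n w z).det =
      ∑ s ∈ Finset.univ.filter (fun s : Finset (Fin (n+2)) => 0 ∈ s),
          (-1) ^ s.card * (w * z ^ (s.card - 1)) * subDet A s +
        ∑ s ∈ Finset.univ.filter (fun s : Finset (Fin (n+2)) => 0 ∉ s),
          (-1) ^ s.card * z ^ s.card * subDet A s := by
    rw [bdiag, Matrix.det_one_sub_mul_diagonal, ← Finset.sum_filter_add_sum_filter_not _ (0 ∈ ·)]
    congr 1 <;> refine Finset.sum_congr rfl fun s hs => ?_ <;>
      rw [Finset.prod_ite_eq_const, mul_right_comm]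
    · rw [if_pos (Finset.mem_filter.1 hs).2]; rfl
    · rw [if_neg (Finset.mem_filter.1 hs).2]; rfl
  rw [hsplit, Finset.sum_filter_eq_sum_range_card (0 ∈ ·) (fun j => (-1) ^ j * (w * z ^ (j - 1))),
    Finset.sum_filter_eq_sum_range_card (0 ∉ ·) (fun j => (-1) ^ j * z ^ j), Fintype.card_fin]
  have hX : ∑ j ∈ Finset.range (n + 2 + 1), (-1) ^ j * (w * z ^ (j - 1)) * piX A j =
      -(w * ∑ j ∈ Finset.range (n+2), (-1 : ℂ) ^ j * piX A (j+1) * z ^ j) := by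
    rw [Finset.sum_range_succ', piX_zero, mul_zero, add_zero, Finset.mul_sum,
      ← Finset.sum_neg_distrib]
    refine Finset.sum_congr rfl fun j _ => ?_
    rw [Nat.add_sub_cancel]
    ring
  have hY : ∑ j ∈ Finset.range (n + 2 + 1), (-1) ^ j * z ^ j * piY A j =
      1 + ∑ j ∈ Finset.Icc 1 (n+1), (-1 : ℂ) ^ j * piY A j * z ^ j := by
    rw [Finset.sum_range_succ, piY_dim, mul_zero, add_zero,
      Finset.sum_range_eq_add_Ico _ (Nat.succ_pos _), Nat.succ_eq_add_one,
      Finset.Ico_add_one_right_eq_Icc, piY_zero]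
    simp only [pow_zero, mul_one, mul_right_comm _ (z ^ _)]
  change ∑ j ∈ _, _ * piX A j + ∑ j ∈ _, _ * piY A j = _
  rw [hX, hY, sub_eq_add_neg, add_comm]

open scoped Matrix.Norms.L2Operator in
theorem opNorm_diagonal {N : ℕ} (d : Fin N → ℂ) : opNorm (Matrix.diagonal d) = ‖d‖ :=
  Matrix.l2_opNorm_diagonal d

theorem opNorm_bdiag (n : ℕ) (w z : ℂ) : opNorm (bdiag n w z) = max ‖w‖ ‖z‖ := by
  rw [bdiag, opNorm_diagonal]
  refine le_antisymm ((pi_norm_le_iff_of_nonneg (by positivity)).2 fun i => ?_) (max_le ?_ ?_)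
  · split_ifs
    exacts [le_max_left _ _, le_max_right _ _]
  · simpa using norm_le_pi_norm (fun i : Fin (n+2) => if i = 0 then w else z) 0
  · simpa using norm_le_pi_norm (fun i : Fin (n+2) => if i = 0 then w else z) 1

theorem mu_le_ofReal_one_div_iff {N : ℕ} {E : Set (Matrix (Fin N) (Fin N) ℂ)}
    {A : Matrix (Fin N) (Fin N) ℂ} {r : ℝ} (hr : 0 < r) :
    mu E A ≤ ENNReal.ofReal (1 / r) ↔ ∀ X ∈ E, (1 - A * X).det = 0 → r ≤ opNorm X := by
  rw [mu, one_div, ENNReal.ofReal_inv_of_pos hr, ENNReal.inv_le_inv, le_iInf_iff, Subtype.forall]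
  simp only [and_imp]
  exact forall₂_congr fun X _ => imp_congr_right fun _ =>
    ENNReal.ofReal_le_ofReal_iff (norm_nonneg _)

/-- For `E = {[w] ⊕ zI}` and `r > 0`: `μ_E(A) ≤ 1/r` iff the zero set of the polynomial
`(1 + Σ (−1)^j Y_j(A) z^j) − w Σ (−1)^j X_{j+1}(A) z^j` is disjoint from `(r𝔻)²`. -/
theorem stmt18 (n : ℕ) (A : Matrix (Fin (n+2)) (Fin (n+2)) ℂ) (r : ℝ) (hr : 0 < r) :
    mu {M | ∃ w z : ℂ, M = bdiag n w z} A ≤ ENNReal.ofReal (1 / r) ↔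
      ∀ z w : ℂ, ‖z‖ < r → ‖w‖ < r →
        (1 + ∑ j ∈ Finset.Icc 1 (n+1), (-1 : ℂ) ^ j * piY A j * z ^ j)
          - w * ∑ j ∈ Finset.range (n+2), (-1 : ℂ) ^ j * piX A (j+1) * z ^ j ≠ 0 := by
  rw [mu_le_ofReal_one_div_iff hr]
  constructor
  · intro h z w hz hw hzero
    have hr_le := h _ ⟨w, z, rfl⟩ (by rw [det_one_sub_mul_bdiag]; exact hzero)
    rw [opNorm_bdiag] at hr_le
    exact (max_lt hw hz).not_ge hr_le
  · rintro h _ ⟨w, z, rfl⟩ hdet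
    rw [opNorm_bdiag]
    by_contra hlt
    obtain ⟨hw, hz⟩ := max_lt_iff.1 (not_le.1 hlt)
    exact h z w hz hw (by rwa [← det_one_sub_mul_bdiag])
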